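/- arXiv:1212.2119 — 2 statements merged into one kernel-verified Lean document; each statement's English description precedes it below -/
import Mathlib

section
/- Let Δ = {δ : Sδ ≤ h} be nonempty and compact, and fix matrices Γ, G, C, B and vectors r, p̄, x₀, A. Then the robust constraint Γ(r + Gδ + C(Ax₀ + B(Dδ + e))) ≤ p̄ for all δ ∈ Δ holds if and only if there exists Z ≥ 0 elementwise with Zᵀh + ΓCBe ≤ p̄ − Γ(r + CAx₀) and Γ(G + CBD) = ZᵀS. -/
open Matrix

section FarkasAux
open Finset

set_option linter.unusedSectionVars false

variable {ι α : Type*} [Fintype ι] [Fintype α]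

lemma exists_dotProduct_repr (f : (α → ℝ) →L[ℝ] ℝ) :
    ∃ y : α → ℝ, ∀ x, f x = y ⬝ᵥ x := by
  classical
  refine ⟨fun a => f (fun j => if a = j then 1 else 0), fun x => ?_⟩
  conv_lhs => rw [pi_eq_sum_univ x]
  rw [map_sum]
  simp [dotProduct, mul_comm]

lemma cone_carat [DecidableEq ι] (v : ι → α → ℝ) :
    ∀ m : ℕ, ∀ z : ι → ℝ, (univ.filter fun i => z i ≠ 0).card ≤ m → (∀ i, 0 ≤ z i) →
    ∃ w : ι → ℝ, (∀ i, 0 ≤ w i) ∧ ∑ i, w i • v i = ∑ i, z i • v i ∧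
      ∀ g : ι → ℝ, (∀ i, w i = 0 → g i = 0) → ∑ i, g i • v i = 0 → ∀ i, g i = 0 := by
  intro m
  induction m with
  | zero =>
    intro z hcard hz
    have hz0 : ∀ i, z i = 0 := by
      intro i
      by_contra hzi
      have : i ∈ univ.filter fun i => z i ≠ 0 := by simp [hzi]
      have := Finset.card_pos.mpr ⟨i, this⟩
      omega
    exact ⟨z, hz, rfl, fun g hg _ i => hg i (hz0 i)⟩
  | succ m ih =>
    intro z hcard hz
    by_cases H : ∀ g : ι → ℝ, (∀ i, z i = 0 → g i = 0) → ∑ i, g i • v i = 0 → ∀ i, g i = 0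
    · exact ⟨z, hz, rfl, H⟩
    push_neg at H
    obtain ⟨g, hg0, hgsum, i₁, hgi₁⟩ := H
    obtain ⟨d, hd0, hdsum, i₂, hdi₂⟩ :
        ∃ d : ι → ℝ, (∀ i, z i = 0 → d i = 0) ∧ ∑ i, d i • v i = 0 ∧ ∃ i, 0 < d i := by
      rcases hgi₁.lt_or_gt with hneg | hpos
      · refine ⟨-g, fun i hi => by simp [hg0 i hi], by simpa using hgsum, i₁, by simpa using hneg⟩
      · exact ⟨g, hg0, hgsum, i₁, hpos⟩
    set T : Finset ι := univ.filter fun i => 0 < d i with hT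
    have hTne : T.Nonempty := ⟨i₂, by simp [hT, hdi₂]⟩
    obtain ⟨i₀, hi₀T, hi₀min⟩ := T.exists_min_image (fun i => z i / d i) hTne
    have hdi₀ : 0 < d i₀ := by simpa [hT] using hi₀T
    set t : ℝ := z i₀ / d i₀ with ht
    have htnn : 0 ≤ t := div_nonneg (hz i₀) hdi₀.le
    set w : ι → ℝ := fun i => z i - t * d i with hw
    have hwnn : ∀ i, 0 ≤ w i := by
      intro i
      rcases le_or_gt (d i) 0 with hdi | hdi
      · have : t * d i ≤ 0 := mul_nonpos_of_nonneg_of_nonpos htnn hdi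
        simp only [hw]; linarith [hz i]
      · have := hi₀min i (by simp [hT, hdi])
        have : t * d i ≤ z i := (le_div_iff₀ hdi).mp this
        simp only [hw]; linarith
    have hwsum : ∑ i, w i • v i = ∑ i, z i • v i := by
      have : ∀ i, (t * d i) • v i = t • (d i • v i) := fun i => smul_smul t (d i) (v i) ▸ rfl
      simp only [hw, sub_smul, Finset.sum_sub_distrib, this, ← Finset.smul_sum, hdsum,
        smul_zero, sub_zero]
    have hzi₀ : z i₀ ≠ 0 := fun h => by
      have := hd0 i₀ h; rw [this] at hdi₀; exact lt_irrefl 0 hdi₀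
    have hwi₀ : w i₀ = 0 := by
      simp only [hw, ht]; field_simp; ring
    have hsubset : (univ.filter fun i => w i ≠ 0) ⊆ (univ.filter fun i => z i ≠ 0).erase i₀ := by
      intro i hi
      simp only [mem_filter, mem_univ, true_and] at hi
      refine Finset.mem_erase.mpr ⟨fun h => hi (h ▸ hwi₀), ?_⟩
      simp only [mem_filter, mem_univ, true_and]
      intro hzi
      exact hi (by simp [hw, hzi, hd0 i hzi])
    have hcard' : (univ.filter fun i => w i ≠ 0).card ≤ m := by
      have h1 := Finset.card_le_card hsubset
      have h2 : i₀ ∈ univ.filter fun i => z i ≠ 0 := by simp [hzi₀]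
      have h3 := Finset.card_erase_of_mem h2
      omega
    obtain ⟨w', hw'1, hw'2, hw'3⟩ := ih w hcard' hwnn
    exact ⟨w', hw'1, hw'2.trans hwsum, hw'3⟩

/-- coefficient-level independence of the subfamily indexed by `s` -/
def ConeIndep (v : ι → α → ℝ) (s : Finset ι) : Prop :=
  ∀ g : ι → ℝ, (∀ i ∉ s, g i = 0) → ∑ i, g i • v i = 0 → ∀ i, g i = 0

noncomputable def coneMap (v : ι → α → ℝ) (s : Finset ι) : ((↥s → ℝ)) →ₗ[ℝ] (α → ℝ) where
  toFun z := ∑ i : ↥s, z i • v i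
  map_add' z z' := by simp [add_smul, Finset.sum_add_distrib]
  map_smul' c z := by
    simp only [RingHom.id_apply, Finset.smul_sum, smul_smul]
    rfl

lemma sum_ext [DecidableEq ι] (v : ι → α → ℝ) (s : Finset ι) (z : ↥s → ℝ) :
    coneMap v s z = ∑ i, (if h : i ∈ s then z ⟨i, h⟩ else 0) • v i := by
  rw [coneMap]
  simp only [LinearMap.coe_mk, AddHom.coe_mk]
  symm
  rw [← Finset.sum_subset (Finset.subset_univ s) (fun i _ hi => by simp [dif_neg hi]),
    ← Finset.sum_coe_sort s]
  exact Finset.sum_congr rfl fun i _ => by rw [dif_pos i.2]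

lemma isClosed_coneComb [DecidableEq ι] (v : ι → α → ℝ) :
    IsClosed {x : α → ℝ | ∃ z : ι → ℝ, (∀ i, 0 ≤ z i) ∧ x = ∑ i, z i • v i} := by
  have key : {x : α → ℝ | ∃ z : ι → ℝ, (∀ i, 0 ≤ z i) ∧ x = ∑ i, z i • v i}
      = ⋃ s : Finset ι, ⋃ _ : ConeIndep v s,
          (coneMap v s) '' {z : ↥s → ℝ | ∀ i, 0 ≤ z i} := by
    ext x
    simp only [Set.mem_setOf_eq, Set.mem_iUnion, Set.mem_image]
    constructor
    · rintro ⟨z, hz, rfl⟩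
      obtain ⟨w, hw1, hw2, hw3⟩ := cone_carat v _ z le_rfl hz
      refine ⟨univ.filter fun i => w i ≠ 0, ?_, fun i => w i, fun i => hw1 i, ?_⟩
      · intro g hg hgsum
        exact hw3 g (fun i hi => hg i (by simp [hi])) hgsum
      · rw [sum_ext, ← hw2]
        refine Finset.sum_congr rfl fun i _ => ?_
        by_cases hi : w i = 0 <;> simp [hi]
    · rintro ⟨s, hs, z, hz, rfl⟩
      refine ⟨fun i => if h : i ∈ s then z ⟨i, h⟩ else 0, fun i => ?_, ?_⟩
      · by_cases h : i ∈ s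
        · simpa [h] using hz ⟨i, h⟩
        · simp [h]
      · exact sum_ext v s z
  rw [key]
  refine isClosed_iUnion_of_finite fun s => isClosed_iUnion_of_finite fun hs => ?_
  have hker : LinearMap.ker (coneMap v s) = ⊥ := by
    rw [LinearMap.ker_eq_bot']
    intro z hz0
    have hext : ∑ i, (if h : i ∈ s then z ⟨i, h⟩ else 0) • v i = 0 := by
      rw [← sum_ext, hz0]
    have := hs (fun i => if h : i ∈ s then z ⟨i, h⟩ else 0)
      (fun i hi => dif_neg hi) hext
    funext i
    have h2 := this i.1
    simp only [dif_pos i.2] at h2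
    simpa using h2
  have hcl := LinearMap.isClosedEmbedding_of_injective hker
  have horth : IsClosed {z : ↥s → ℝ | ∀ i, 0 ≤ z i} := by
    have he : {z : ↥s → ℝ | ∀ i, 0 ≤ z i} = ⋂ i, {z | 0 ≤ z i} := by
      ext; simp [Set.mem_iInter]
    rw [he]
    exact isClosed_iInter fun i => isClosed_le continuous_const (continuous_apply i)
  exact hcl.isClosedMap _ horth

lemma farkas [DecidableEq ι] (M : ι → α → ℝ) (a : α → ℝ)
    (H : ∀ y : α → ℝ, (∀ i, M i ⬝ᵥ y ≤ 0) → a ⬝ᵥ y ≤ 0) :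
    ∃ z : ι → ℝ, (∀ i, 0 ≤ z i) ∧ a = ∑ i, z i • M i := by
  by_contra hc
  push_neg at hc
  set K := {x : α → ℝ | ∃ z : ι → ℝ, (∀ i, 0 ≤ z i) ∧ x = ∑ i, z i • M i} with hKdef
  have hKcl : IsClosed K := isClosed_coneComb M
  have hKconv : Convex ℝ K := by
    rintro x ⟨zx, hzx, rfl⟩ y ⟨zy, hzy, rfl⟩ p q hp hq hpq
    refine ⟨fun i => p * zx i + q * zy i,
      fun i => add_nonneg (mul_nonneg hp (hzx i)) (mul_nonneg hq (hzy i)), ?_⟩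
    rw [Finset.smul_sum, Finset.smul_sum, ← Finset.sum_add_distrib]
    refine Finset.sum_congr rfl fun i _ => ?_
    rw [add_smul, smul_smul, smul_smul]
  have haK : a ∉ K := fun ⟨z, hz, he⟩ => hc z hz he
  obtain ⟨f, u, hfK, hua⟩ := geometric_hahn_banach_closed_point hKconv hKcl haK
  obtain ⟨y, hy⟩ := exists_dotProduct_repr f
  have h0K : (0 : α → ℝ) ∈ K := ⟨0, fun i => le_refl 0, by simp⟩
  have hu0 : (0:ℝ) < u := by simpa using hfK 0 h0K
  have hle : ∀ x ∈ K, f x ≤ 0 := by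
    intro x hx
    by_contra hpos
    push_neg at hpos
    have hmem : ∀ t : ℝ, 0 ≤ t → t • x ∈ K := by
      rintro t ht
      obtain ⟨z, hz, rfl⟩ := hx
      refine ⟨fun i => t * z i, fun i => mul_nonneg ht (hz i), ?_⟩
      rw [Finset.smul_sum]
      exact Finset.sum_congr rfl fun i _ => smul_smul t (z i) (M i)
    have h2 := hfK ((2 * u / f x) • x) (hmem _ (by positivity))
    rw [f.map_smul, smul_eq_mul, div_mul_cancel₀ _ (ne_of_gt hpos)] at h2
    linarith
  have hrow : ∀ i, M i ⬝ᵥ y ≤ 0 := by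
    intro i
    have hMi : M i ∈ K := by
      refine ⟨fun j => if j = i then 1 else 0, fun j => by positivity, ?_⟩
      simp [ite_smul]
    have := hle _ hMi
    rw [hy] at this
    rwa [dotProduct_comm]
  have hay : a ⬝ᵥ y ≤ 0 := H y hrow
  have : f a ≤ 0 := by rw [hy, dotProduct_comm]; exact hay
  linarith

lemma affine_farkas [DecidableEq ι] (M : ι → α → ℝ) (h : ι → ℝ) (c : α → ℝ) (b : ℝ)
    (hne : ∃ δ : α → ℝ, ∀ i, M i ⬝ᵥ δ ≤ h i)
    (hrec : ∀ d : α → ℝ, (∀ i, M i ⬝ᵥ d ≤ 0) → d = 0)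
    (H : ∀ δ : α → ℝ, (∀ i, M i ⬝ᵥ δ ≤ h i) → c ⬝ᵥ δ ≤ b) :
    ∃ z : ι → ℝ, (∀ i, 0 ≤ z i) ∧ (∀ j, c j = ∑ i, z i * M i j) ∧ ∑ i, z i * h i ≤ b := by
  classical
  set M' : (ι ⊕ Unit) → (α ⊕ Unit) → ℝ :=
    Sum.elim (fun i => Sum.elim (M i) (fun _ => -h i)) (fun _ => Sum.elim 0 (fun _ => -1))
    with hM'
  set a' : (α ⊕ Unit) → ℝ := Sum.elim c (fun _ => -b) with ha'
  have key : ∀ y' : (α ⊕ Unit) → ℝ, (∀ i', M' i' ⬝ᵥ y' ≤ 0) → a' ⬝ᵥ y' ≤ 0 := by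
    intro y' hy'
    set y : α → ℝ := fun j => y' (Sum.inl j) with hyy
    set t : ℝ := y' (Sum.inr ()) with htt
    have hdp : ∀ g : α → ℝ, ∀ s : ℝ,
        (Sum.elim g (fun _ => s)) ⬝ᵥ y' = g ⬝ᵥ y + s * t := by
      intro g s
      simp [dotProduct, Fintype.sum_sum_type, hyy, htt]
    have ht : 0 ≤ t := by
      have := hy' (Sum.inr ())
      have h2 : (Sum.elim (0 : α → ℝ) (fun _ => (-1:ℝ))) ⬝ᵥ y' = -t := by
        rw [hdp]; simp
      simp only [hM', Sum.elim_inr] at this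
      rw [h2] at this
      linarith
    have hMyt : ∀ i, M i ⬝ᵥ y ≤ t * h i := by
      intro i
      have := hy' (Sum.inl i)
      simp only [hM', Sum.elim_inl] at this
      rw [hdp] at this
      linarith
    have hgoal : c ⬝ᵥ y ≤ t * b := by
      rcases eq_or_lt_of_le ht with ht0 | htpos
      · have hy0 : y = 0 := hrec y fun i => by have := hMyt i; rw [← ht0] at this; linarith
        rw [hy0, ← ht0]
        simp
      · have hMi : ∀ i, M i ⬝ᵥ (t⁻¹ • y) ≤ h i := by
          intro i
          rw [dotProduct_smul, smul_eq_mul]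
          rw [inv_mul_le_iff₀ htpos]
          linarith [hMyt i]
        have := H _ hMi
        rw [dotProduct_smul, smul_eq_mul, inv_mul_le_iff₀ htpos] at this
        linarith
    rw [ha', hdp]
    linarith
  obtain ⟨z', hz'0, hz'⟩ := farkas M' a' key
  refine ⟨fun i => z' (Sum.inl i), fun i => hz'0 _, ?_, ?_⟩
  · intro j
    have := congrFun hz' (Sum.inl j)
    rw [Finset.sum_apply] at this
    simpa [hM', ha', Fintype.sum_sum_type] using this
  · have := congrFun hz' (Sum.inr ())
    rw [Finset.sum_apply] at this
    simp only [ha', Sum.elim_inr, hM', Sum.elim_inl, Pi.smul_apply, smul_eq_mul,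
      Fintype.sum_sum_type, Fintype.sum_unique, mul_neg, mul_one, Finset.sum_neg_distrib] at this
    have hs := hz'0 (Sum.inr ())
    linarith

end FarkasAux


open Finset in
/-- Finite reformulation of the robust line-flow constraint (8c) for affine policies
(single-participant version). -/
theorem robust_line_flow_duality {q nδ L T nx n0 : ℕ}
    (S : Matrix (Fin q) (Fin nδ) ℝ) (h : Fin q → ℝ)
    (Δ : Set (Fin nδ → ℝ)) (hΔ : Δ = {δ | ∀ i, S.mulVec δ i ≤ h i})
    (hne : Δ.Nonempty) (hcpt : IsCompact Δ)
    (Γ : Matrix (Fin L) (Fin T) ℝ) (G : Matrix (Fin T) (Fin nδ) ℝ)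
    (C : Matrix (Fin T) (Fin nx) ℝ) (A : Matrix (Fin nx) (Fin n0) ℝ)
    (B : Matrix (Fin nx) (Fin T) ℝ)
    (r : Fin T → ℝ) (pbar : Fin L → ℝ) (x₀ : Fin n0 → ℝ)
    (D : Matrix (Fin T) (Fin nδ) ℝ) (e : Fin T → ℝ) :
    (∀ δ ∈ Δ, ∀ j,
        Γ.mulVec (r + G.mulVec δ + C.mulVec (A.mulVec x₀ + B.mulVec (D.mulVec δ + e))) j
          ≤ pbar j) ↔
      ∃ Z : Matrix (Fin q) (Fin L) ℝ, (∀ i j, 0 ≤ Z i j) ∧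
        (∀ j, (Z.transpose.mulVec h + (Γ * C * B).mulVec e) j
            ≤ (pbar - Γ.mulVec (r + (C * A).mulVec x₀)) j) ∧
        Γ * (G + C * B * D) = Z.transpose * S := by
  classical
  have hexpand : ∀ (δ : Fin nδ → ℝ) (j : Fin L),
      Γ.mulVec (r + G.mulVec δ + C.mulVec (A.mulVec x₀ + B.mulVec (D.mulVec δ + e))) j
        = (Γ * (G + C * B * D)).mulVec δ j
          + (Γ.mulVec (r + (C * A).mulVec x₀) j + (Γ * C * B).mulVec e j) := by
    intro δ j
    simp only [Matrix.mulVec_add, Matrix.add_mulVec, ← Matrix.mulVec_mulVec, Pi.add_apply,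
      Matrix.add_mul, Matrix.mul_add]
    ring
  constructor
  · intro hyp
    obtain ⟨δ₀, hδ₀⟩ := hne
    have hδ₀' : ∀ i, S.mulVec δ₀ i ≤ h i := by rw [hΔ] at hδ₀; exact hδ₀
    have hrec : ∀ d : Fin nδ → ℝ, (∀ i, (fun k => S i k) ⬝ᵥ d ≤ 0) → d = 0 := by
      intro d hd
      by_contra hd0
      obtain ⟨R, hR⟩ := hcpt.isBounded.subset_closedBall 0
      have hRnn : 0 ≤ R := by
        have := hR hδ₀
        rw [Metric.mem_closedBall] at this
        exact le_trans dist_nonneg this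
      have hdn : 0 < ‖d‖ := norm_pos_iff.mpr hd0
      set t : ℝ := (R + ‖δ₀‖ + 1) / ‖d‖ with htdef
      have htnn : 0 ≤ t := by positivity
      have htmem : δ₀ + t • d ∈ Δ := by
        rw [hΔ]
        intro i
        have hsplit : S.mulVec (δ₀ + t • d) i = S.mulVec δ₀ i + t * S.mulVec d i := by
          rw [Matrix.mulVec_add, Matrix.mulVec_smul]
          simp
        have hdi : S.mulVec d i ≤ 0 := hd i
        have := hδ₀' i
        rw [hsplit]
        nlinarith
      have hnorm : ‖δ₀ + t • d‖ ≤ R := by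
        have := hR htmem
        rwa [Metric.mem_closedBall, dist_zero_right] at this
      have h1 : δ₀ + t • d - δ₀ = t • d := by abel
      have h2 : ‖t • d‖ ≤ R + ‖δ₀‖ := by
        calc ‖t • d‖ = ‖δ₀ + t • d - δ₀‖ := by rw [h1]
        _ ≤ ‖δ₀ + t • d‖ + ‖δ₀‖ := norm_sub_le _ _
        _ ≤ R + ‖δ₀‖ := by linarith
      have h3 : ‖t • d‖ = R + ‖δ₀‖ + 1 := by
        rw [norm_smul, Real.norm_eq_abs, abs_of_nonneg htnn, htdef,
          div_mul_cancel₀ _ (ne_of_gt hdn)]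
      rw [h3] at h2
      linarith
    have main : ∀ j : Fin L, ∃ z : Fin q → ℝ, (∀ i, 0 ≤ z i) ∧
        (∀ k, (Γ * (G + C * B * D)) j k = ∑ i, z i * S i k) ∧
        ∑ i, z i * h i ≤ pbar j
          - (Γ.mulVec (r + (C * A).mulVec x₀) j + (Γ * C * B).mulVec e j) := by
      intro j
      refine affine_farkas (fun i k => S i k) h (fun k => (Γ * (G + C * B * D)) j k) _
        ⟨δ₀, fun i => hδ₀' i⟩ hrec ?_
      intro δ hδ
      have hj := hyp δ (by rw [hΔ]; exact hδ) j
      rw [hexpand δ j] at hj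
      have hdp : (fun k => (Γ * (G + C * B * D)) j k) ⬝ᵥ δ
          = (Γ * (G + C * B * D)).mulVec δ j := rfl
      rw [hdp]
      linarith
    choose zf hz1 hz2 hz3 using main
    refine ⟨Matrix.of fun i j => zf j i, fun i j => hz1 j i, ?_, ?_⟩
    · intro j
      have hzt : (Matrix.of fun i j => zf j i : Matrix (Fin q) (Fin L) ℝ).transpose.mulVec h j
          = ∑ i, zf j i * h i := by
        simp [Matrix.mulVec, dotProduct]
      simp only [Pi.add_apply, Pi.sub_apply, hzt]
      linarith [hz3 j]
    · ext j k
      rw [Matrix.mul_apply]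
      exact hz2 j k
  · rintro ⟨Z, hZ0, hZ1, hZ2⟩ δ hδ j
    rw [hΔ] at hδ
    rw [hexpand δ j]
    have e1 : (Γ * (G + C * B * D)).mulVec δ j = ∑ i, Z i j * S.mulVec δ i := by
      rw [hZ2, ← Matrix.mulVec_mulVec]
      simp [Matrix.mulVec, dotProduct]
    have e2 : ∑ i, Z i j * S.mulVec δ i ≤ ∑ i, Z i j * h i :=
      Finset.sum_le_sum fun i _ => mul_le_mul_of_nonneg_left (hδ i) (hZ0 i j)
    have e3 : Z.transpose.mulVec h j = ∑ i, Z i j * h i := by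
      simp [Matrix.mulVec, dotProduct]
    have h4 := hZ1 j
    simp only [Pi.add_apply, Pi.sub_apply, e3] at h4
    linarith
end

section
/- Let J̃ᵢ be convex in (Dᵢ, eᵢ) for each i, and suppose (D*, e*, Z*) is optimal for the constrained problem (13) with multipliers (λ, Π, ν, Ψ) satisfying the KKT conditions. Then for each participant i, (Dᵢ*, eᵢ*) minimizes J̃ᵢ(x₀ⁱ, Dᵢ, eᵢ) − λᵢᵀeᵢ − ⟨Πᵢ, Dᵢ⟩ over (Dᵢ, eᵢ) ∈ F_i(x₀ⁱ), where λᵢ = −BᵢᵀCᵢᵀ(λ + Γᵢᵀν) and Πᵢ = −BᵢᵀCᵢᵀ(Π + ΓᵢᵀΨ). -/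
open Matrix

private lemma sum_upd {n : ℕ} (i : Fin n) {α β γ : Type*} [AddCommGroup γ]
    (f : Fin n → α → β → γ) (D : Fin n → α) (e : Fin n → β) (a : α) (b : β) :
    ∑ j, f j (Function.update D i a j) (Function.update e i b j)
      = ∑ j, f j (D j) (e j) + (f i a b - f i (D i) (e i)) := by
  rw [← Finset.sum_erase_add _ _ (Finset.mem_univ i),
      ← Finset.sum_erase_add Finset.univ (fun j => f j (D j) (e j)) (Finset.mem_univ i)]
  have hcongr : ∑ j ∈ Finset.univ.erase i,
        f j (Function.update D i a j) (Function.update e i b j)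
      = ∑ j ∈ Finset.univ.erase i, f j (D j) (e j) := by
    refine Finset.sum_congr rfl fun j hj => ?_
    rw [Function.update_of_ne (Finset.ne_of_mem_erase hj),
        Function.update_of_ne (Finset.ne_of_mem_erase hj)]
  rw [hcongr, Function.update_self, Function.update_self]
  abel


/-- Price decentralization: at a KKT point of the convex coupled problem (13), each
participant's optimal policy minimizes its own cost minus the payments at the prices
`λᵢ = −BᵢᵀCᵢᵀ(λ + Γᵢᵀν)` and `Πᵢ = −BᵢᵀCᵢᵀ(Π + ΓᵢᵀΨ)` over its feasible set. -/
theorem price_decentralization {Np T nδ nx n0 L q : ℕ}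
    (Jt : Fin Np → Matrix (Fin T) (Fin nδ) ℝ → (Fin T → ℝ) → ℝ)
    (hconv : ∀ i, ConvexOn ℝ Set.univ (fun p : Matrix (Fin T) (Fin nδ) ℝ × (Fin T → ℝ) =>
      Jt i p.1 p.2))
    (F : Fin Np → Set (Matrix (Fin T) (Fin nδ) ℝ × (Fin T → ℝ)))
    (r : Fin Np → Fin T → ℝ) (x₀ : Fin Np → Fin n0 → ℝ)
    (G : Fin Np → Matrix (Fin T) (Fin nδ) ℝ)
    (C : Fin Np → Matrix (Fin T) (Fin nx) ℝ)
    (A : Fin Np → Matrix (Fin nx) (Fin n0) ℝ)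
    (B : Fin Np → Matrix (Fin nx) (Fin T) ℝ)
    (Γ : Fin Np → Matrix (Fin L) (Fin T) ℝ)
    (S : Matrix (Fin q) (Fin nδ) ℝ) (h : Fin q → ℝ) (pbar : Fin L → ℝ)
    (lam : Fin T → ℝ) (Pim : Matrix (Fin T) (Fin nδ) ℝ)
    (nu : Fin L → ℝ) (hnu : ∀ j, 0 ≤ nu j) (Psi : Matrix (Fin L) (Fin nδ) ℝ)
    (Lag : (Fin Np → Matrix (Fin T) (Fin nδ) ℝ) → (Fin Np → Fin T → ℝ) →
      Matrix (Fin q) (Fin L) ℝ → ℝ)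
    (hLag : ∀ D e Z, Lag D e Z =
      (∑ i, Jt i (D i) (e i))
      + lam ⬝ᵥ (∑ i, (r i + (C i * A i).mulVec (x₀ i) + (C i * B i).mulVec (e i)))
      + Matrix.trace (Pim.transpose * (∑ i, (G i + C i * B i * D i)))
      + nu ⬝ᵥ (Z.transpose.mulVec h + (∑ i, (Γ i * C i * B i).mulVec (e i))
          - (pbar - ∑ i, (Γ i).mulVec (r i + (C i * A i).mulVec (x₀ i))))
      + Matrix.trace (Psi.transpose *
          ((∑ i, Γ i * (G i + C i * B i * D i)) - Z.transpose * S)))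
    (Dstar : Fin Np → Matrix (Fin T) (Fin nδ) ℝ) (estar : Fin Np → Fin T → ℝ)
    (Zstar : Matrix (Fin q) (Fin L) ℝ)
    (hfeasstar : ∀ i, (Dstar i, estar i) ∈ F i)
    (hZstar : ∀ a b, 0 ≤ Zstar a b)
    (hKKT : ∀ (D : Fin Np → Matrix (Fin T) (Fin nδ) ℝ) (e : Fin Np → Fin T → ℝ)
      (Z : Matrix (Fin q) (Fin L) ℝ), (∀ i, (D i, e i) ∈ F i) → (∀ a b, 0 ≤ Z a b) →
      Lag Dstar estar Zstar ≤ Lag D e Z)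
    (lamP : Fin Np → Fin T → ℝ)
    (hlamP : ∀ i, lamP i =
      -(((B i).transpose * (C i).transpose).mulVec (lam + (Γ i).transpose.mulVec nu)))
    (PiP : Fin Np → Matrix (Fin T) (Fin nδ) ℝ)
    (hPiP : ∀ i, PiP i =
      -((B i).transpose * (C i).transpose * (Pim + (Γ i).transpose * Psi))) :
    ∀ i, ∀ Di ei, (Di, ei) ∈ F i →
      Jt i (Dstar i) (estar i) - lamP i ⬝ᵥ estar i
          - Matrix.trace ((PiP i).transpose * Dstar i)
        ≤ Jt i Di ei - lamP i ⬝ᵥ ei - Matrix.trace ((PiP i).transpose * Di) := by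
  intro i Di ei hfi
  have hkey_e : ∀ v : Fin T → ℝ, lamP i ⬝ᵥ v
      = -(lam ⬝ᵥ (C i * B i).mulVec v + nu ⬝ᵥ (Γ i * C i * B i).mulVec v) := by
    intro v
    rw [hlamP, ← Matrix.transpose_mul]
    simp only [Matrix.mulVec_add, neg_dotProduct, add_dotProduct,
      Matrix.mulVec_transpose, Matrix.dotProduct_mulVec, Matrix.vecMul_vecMul,
      Matrix.mul_assoc]
  have hkey_D : ∀ M : Matrix (Fin T) (Fin nδ) ℝ, Matrix.trace ((PiP i).transpose * M)
      = -(Matrix.trace (Pim.transpose * (C i * B i * M))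
          + Matrix.trace (Psi.transpose * (Γ i * (C i * B i * M)))) := by
    intro M
    rw [hPiP]
    simp only [Matrix.transpose_neg, Matrix.transpose_mul, Matrix.transpose_add,
      Matrix.transpose_transpose, Matrix.neg_mul, Matrix.trace_neg, Matrix.add_mul,
      Matrix.trace_add, Matrix.mul_assoc]
  have hfeas' : ∀ j, (Function.update Dstar i Di j, Function.update estar i ei j) ∈ F j := by
    intro j
    rcases eq_or_ne j i with rfl | hj
    · simpa using hfi
    · simpa [Function.update_of_ne hj] using hfeasstar j
  have hle := hKKT _ _ Zstar hfeas' hZstar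
  rw [hLag, hLag,
    sum_upd i (fun j d e => Jt j d e) Dstar estar Di ei,
    sum_upd i (fun j _ e => r j + (C j * A j).mulVec (x₀ j) + (C j * B j).mulVec e)
      Dstar estar Di ei,
    sum_upd i (fun j d _ => G j + C j * B j * d) Dstar estar Di ei,
    sum_upd i (fun j _ e => (Γ j * C j * B j).mulVec e) Dstar estar Di ei,
    sum_upd i (fun j d _ => Γ j * (G j + C j * B j * d)) Dstar estar Di ei] at hle
  simp only [Matrix.mul_add, Matrix.mul_sub, Matrix.trace_add, Matrix.trace_sub,
    dotProduct_add, dotProduct_sub, add_dotProduct,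
    sub_dotProduct] at hle
  linarith [hle, hkey_e ei, hkey_e (estar i), hkey_D Di, hkey_D (Dstar i)]
end
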